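/- arXiv:1108.2815 — 4 statements merged into one kernel-verified Lean document; each statement's English description precedes it below -/
import Mathlib

section
/- Let (X^n, Y^n, Z^n) be finite random variables. If for each i the Markov chains Z_i^n − Y^{i-1} − Y_i and Z_i^n − (X^i, Y^{i-1}) − Y_i hold (i.e., H(Y_i|Y^{i-1},Z^n) = H(Y_i|Y^{i-1},Z^{i-1}) and H(Y_i|X^i,Y^{i-1},Z^n) = H(Y_i|X^i,Y^{i-1},Z^{i-1})), then the conditional directed information I(X^n → Y^n | Z^n) := ∑_{i=1}^n I(X^i; Y_i | Y^{i-1}, Z^n) equals the causally conditional directed information I(X^n → Y^n ‖ Z^n) := ∑_{i=1}^n I(X^i; Y_i | Y^{i-1}, Z^{i-1}). -/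
open Finset

namespace NFB

variable {Ω : Type*} [Fintype Ω]

/-- Probability that the finite random variable `X` (on finite sample space `Ω`
with weights `μ`) takes the value `a`. -/
noncomputable def pr (μ : Ω → ℝ) {α : Type*} [Fintype α] [DecidableEq α]
    (X : Ω → α) (a : α) : ℝ :=
  ∑ ω ∈ Finset.univ.filter (fun ω => X ω = a), μ ω

/-- Conditional probability `p(X = a | Y = b)`. -/
noncomputable def condpr (μ : Ω → ℝ) {α β : Type*} [Fintype α] [DecidableEq α]
    [Fintype β] [DecidableEq β] (X : Ω → α) (Y : Ω → β) (a : α) (b : β) : ℝ :=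
  pr μ (fun ω => (X ω, Y ω)) (a, b) / pr μ Y b

/-- Shannon entropy (base 2) of a finite random variable. -/
noncomputable def ent (μ : Ω → ℝ) {α : Type*} [Fintype α] [DecidableEq α]
    (X : Ω → α) : ℝ :=
  ∑ a : α, -(pr μ X a * Real.logb 2 (pr μ X a))

/-- Shannon entropy (base 2) of a distribution given directly as a weight function. -/
noncomputable def entD {γ : Type*} [Fintype γ] (p : γ → ℝ) : ℝ :=
  ∑ c : γ, -(p c * Real.logb 2 (p c))

/-- Binary entropy function (base 2). -/
noncomputable def binent (a : ℝ) : ℝ :=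
  -(a * Real.logb 2 a) - ((1 - a) * Real.logb 2 (1 - a))

/-- Conditional entropy `H(X | Y)`. -/
noncomputable def condent (μ : Ω → ℝ) {α β : Type*} [Fintype α] [DecidableEq α]
    [Fintype β] [DecidableEq β] (X : Ω → α) (Y : Ω → β) : ℝ :=
  ent μ (fun ω => (X ω, Y ω)) - ent μ Y

/-- Mutual information `I(X; Y)`. -/
noncomputable def mi (μ : Ω → ℝ) {α β : Type*} [Fintype α] [DecidableEq α]
    [Fintype β] [DecidableEq β] (X : Ω → α) (Y : Ω → β) : ℝ :=
  ent μ X + ent μ Y - ent μ (fun ω => (X ω, Y ω))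

/-- Conditional mutual information `I(X; Y | Z)`. -/
noncomputable def cmi (μ : Ω → ℝ) {α β γ : Type*} [Fintype α] [DecidableEq α]
    [Fintype β] [DecidableEq β] [Fintype γ] [DecidableEq γ]
    (X : Ω → α) (Y : Ω → β) (Z : Ω → γ) : ℝ :=
  condent μ X Z + condent μ Y Z - condent μ (fun ω => (X ω, Y ω)) Z

/-- The length-`i` prefix of a sequence `x : Fin n → α`. -/
def pfx {α : Type*} {n : ℕ} (x : Fin n → α) (i : ℕ) (h : i ≤ n) : Fin i → α :=
  fun j => x (Fin.castLE h j)

/-- Directed information `I(Xⁿ → Yⁿ) = ∑ᵢ I(Xⁱ; Yᵢ | Yⁱ⁻¹)`. -/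
noncomputable def dirinfo (μ : Ω → ℝ) {α β : Type*} [Fintype α] [DecidableEq α]
    [Fintype β] [DecidableEq β] {n : ℕ} (X : Ω → Fin n → α) (Y : Ω → Fin n → β) : ℝ :=
  ∑ i : Fin n, cmi μ (fun ω => pfx (X ω) (i.1 + 1) i.isLt)
    (fun ω => Y ω i) (fun ω => pfx (Y ω) i.1 i.isLt.le)

/-- Conditional directed information `I(Xⁿ → Yⁿ | W) = ∑ᵢ I(Xⁱ; Yᵢ | Yⁱ⁻¹, W)`. -/
noncomputable def dirinfoCond (μ : Ω → ℝ) {α β γ : Type*} [Fintype α] [DecidableEq α]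
    [Fintype β] [DecidableEq β] [Fintype γ] [DecidableEq γ]
    {n : ℕ} (X : Ω → Fin n → α) (Y : Ω → Fin n → β) (W : Ω → γ) : ℝ :=
  ∑ i : Fin n, cmi μ (fun ω => pfx (X ω) (i.1 + 1) i.isLt)
    (fun ω => Y ω i) (fun ω => (pfx (Y ω) i.1 i.isLt.le, W ω))

/-- Causal conditional directed information
`I(Xⁿ → Yⁿ ‖ Zⁿ) = ∑ᵢ I(Xⁱ; Yᵢ | Yⁱ⁻¹, Zⁱ⁻¹)`. -/
noncomputable def dirinfoCausal (μ : Ω → ℝ) {α β γ : Type*} [Fintype α] [DecidableEq α]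
    [Fintype β] [DecidableEq β] [Fintype γ] [DecidableEq γ]
    {n : ℕ} (X : Ω → Fin n → α) (Y : Ω → Fin n → β) (Z : Ω → Fin n → γ) : ℝ :=
  ∑ i : Fin n, cmi μ (fun ω => pfx (X ω) (i.1 + 1) i.isLt)
    (fun ω => Y ω i) (fun ω => (pfx (Y ω) i.1 i.isLt.le, pfx (Z ω) i.1 i.isLt.le))

/-- Directed information from feedback to outputs
`I(Zⁿ⁻¹ → Yⁿ) = ∑ᵢ I(Zⁱ⁻¹; Yᵢ | Yⁱ⁻¹)`. -/
noncomputable def fbinfo (μ : Ω → ℝ) {ζ β : Type*} [Fintype ζ] [DecidableEq ζ]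
    [Fintype β] [DecidableEq β] {n : ℕ} (Z : Ω → Fin n → ζ) (Y : Ω → Fin n → β) : ℝ :=
  ∑ i : Fin n, cmi μ (fun ω => pfx (Z ω) i.1 i.isLt.le)
    (fun ω => Y ω i) (fun ω => pfx (Y ω) i.1 i.isLt.le)

lemma pr_equiv (μ : Ω → ℝ) {α β : Type*} [Fintype α] [DecidableEq α]
    [Fintype β] [DecidableEq β] (e : α ≃ β) (X : Ω → α) (a : α) :
    pr μ (fun ω => e (X ω)) (e a) = pr μ X a := by
  unfold pr
  congr 1
  ext ω
  simp

lemma ent_equiv (μ : Ω → ℝ) {α β : Type*} [Fintype α] [DecidableEq α]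
    [Fintype β] [DecidableEq β] (e : α ≃ β) (X : Ω → α) :
    ent μ (fun ω => e (X ω)) = ent μ X := by
  unfold ent
  rw [← Equiv.sum_comp e]
  refine Finset.sum_congr rfl fun a _ => ?_
  rw [pr_equiv]

def reshuffle (α β γ : Type*) : (α × β) × γ ≃ β × α × γ where
  toFun p := (p.1.2, p.1.1, p.2)
  invFun p := ((p.2.1, p.1), p.2.2)
  left_inv p := rfl
  right_inv p := rfl

lemma cmi_eq_condent_sub (μ : Ω → ℝ) {α β γ : Type*} [Fintype α] [DecidableEq α]
    [Fintype β] [DecidableEq β] [Fintype γ] [DecidableEq γ]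
    (X : Ω → α) (Y : Ω → β) (W : Ω → γ) :
    cmi μ X Y W = condent μ Y W - condent μ Y (fun ω => (X ω, W ω)) := by
  have h := ent_equiv μ (reshuffle α β γ) (fun ω => ((X ω, Y ω), W ω))
  simp only [reshuffle, Equiv.coe_fn_mk] at h
  unfold cmi condent
  dsimp only
  linarith

/-- under the Markov chains `Zᵢⁿ − Yⁱ⁻¹ − Yᵢ` and
`Zᵢⁿ − (Xⁱ, Yⁱ⁻¹) − Yᵢ` (stated as entropy identities), the conditional
directed information `I(Xⁿ → Yⁿ | Zⁿ)` equals the causal conditional directed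
information `I(Xⁿ → Yⁿ ‖ Zⁿ)`. -/
theorem stmt1 {Ω : Type*} [Fintype Ω] (μ : Ω → ℝ)
    (hμ0 : ∀ ω, 0 ≤ μ ω) (hμ1 : ∑ ω, μ ω = 1)
    {α β γ : Type*} [Fintype α] [DecidableEq α] [Fintype β] [DecidableEq β]
    [Fintype γ] [DecidableEq γ]
    {n : ℕ} (X : Ω → Fin n → α) (Y : Ω → Fin n → β) (Z : Ω → Fin n → γ)
    (hA : ∀ i : Fin n,
      condent μ (fun ω => Y ω i) (fun ω => (pfx (Y ω) i.1 i.isLt.le, Z ω))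
      = condent μ (fun ω => Y ω i)
          (fun ω => (pfx (Y ω) i.1 i.isLt.le, pfx (Z ω) i.1 i.isLt.le)))
    (hB : ∀ i : Fin n,
      condent μ (fun ω => Y ω i)
          (fun ω => (pfx (X ω) (i.1 + 1) i.isLt, pfx (Y ω) i.1 i.isLt.le, Z ω))
      = condent μ (fun ω => Y ω i)
          (fun ω => (pfx (X ω) (i.1 + 1) i.isLt, pfx (Y ω) i.1 i.isLt.le,
            pfx (Z ω) i.1 i.isLt.le))) :
    dirinfoCond μ X Y Z = dirinfoCausal μ X Y Z := by
  unfold dirinfoCond dirinfoCausal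
  refine Finset.sum_congr rfl fun i _ => ?_
  rw [cmi_eq_condent_sub, cmi_eq_condent_sub, hA i]
  congr 1
  exact hB i
end NFB
end

section
/- Consider a channel with noisy feedback: a message W, channel inputs X^n, channel outputs Y^n, where for each i the Markov chain W − (X^i, Y^{i-1}) − Y_i holds (i.e., p(y_i | x^i, y^{i-1}, w) = p(y_i | x^i, y^{i-1})). Then I(W; Y^n) = I(X^n → Y^n) − I(X^n → Y^n | W), where I(X^n → Y^n) = ∑_{i=1}^n I(X^i; Y_i | Y^{i-1}) and I(X^n → Y^n | W) = ∑_{i=1}^n I(X^i; Y_i | Y^{i-1}, W). -/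
open Finset

namespace NFB

variable {Ω : Type*} [Fintype Ω]

lemma pr_comp_inj (μ : Ω → ℝ) {α β : Type*} [Fintype α] [DecidableEq α]
    [Fintype β] [DecidableEq β] (X : Ω → α) (e : α → β)
    (he : Function.Injective e) (a : α) :
    pr μ (fun ω => e (X ω)) (e a) = pr μ X a := by
  unfold pr; congr 1; ext ω; simp [he.eq_iff]

lemma ent_comp_inj (μ : Ω → ℝ) {α β : Type*} [Fintype α] [DecidableEq α]
    [Fintype β] [DecidableEq β] (X : Ω → α) (e : α → β)
    (he : Function.Injective e) :
    ent μ (fun ω => e (X ω)) = ent μ X := by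
  unfold ent
  rw [← Finset.sum_subset (Finset.subset_univ (Finset.univ.image e))
      (fun b _ hb => ?_), Finset.sum_image (fun a _ a' _ h => he h)]
  · refine Finset.sum_congr rfl fun a _ => ?_
    rw [pr_comp_inj μ X e he a]
  · have h0 : pr μ (fun ω => e (X ω)) b = 0 := by
      unfold pr
      rw [Finset.filter_false_of_mem, Finset.sum_empty]
      intro ω _ h
      exact hb (by simp only [Finset.mem_image]; exact ⟨X ω, Finset.mem_univ _, h⟩)
    rw [h0]; simp

lemma ent_comp_inj' (μ : Ω → ℝ) {α β : Type*} [Fintype α] [DecidableEq α]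
    [Fintype β] [DecidableEq β] (X : Ω → α) (X' : Ω → β) (e : α → β)
    (he : Function.Injective e) (h : ∀ ω, X' ω = e (X ω)) :
    ent μ X' = ent μ X := by
  have hX : X' = fun ω => e (X ω) := funext h
  rw [hX]
  exact ent_comp_inj μ X e he

lemma ent_unique (μ : Ω → ℝ) (hμ1 : ∑ ω, μ ω = 1) {α : Type*} [Fintype α]
    [DecidableEq α] [Unique α] (X : Ω → α) : ent μ X = 0 := by
  unfold ent
  rw [Fintype.sum_unique]
  have : pr μ X default = 1 := by
    unfold pr
    rw [Finset.filter_true_of_mem (fun ω _ => Subsingleton.elim _ _)]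
    exact hμ1
  rw [this]; simp

/-- for a channel with noisy feedback satisfying the Markov chain
`W − (Xⁱ, Yⁱ⁻¹) − Yᵢ`, we have
`I(W; Yⁿ) = I(Xⁿ → Yⁿ) − I(Xⁿ → Yⁿ | W)`. -/
theorem stmt2 {Ω : Type*} [Fintype Ω] (μ : Ω → ℝ)
    (hμ0 : ∀ ω, 0 ≤ μ ω) (hμ1 : ∑ ω, μ ω = 1)
    {α β γ : Type*} [Fintype α] [DecidableEq α] [Fintype β] [DecidableEq β]
    [Fintype γ] [DecidableEq γ]
    {n : ℕ} (W : Ω → γ) (X : Ω → Fin n → α) (Y : Ω → Fin n → β)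
    (hMarkov : ∀ i : Fin n,
      condent μ (fun ω => Y ω i)
          (fun ω => (pfx (X ω) (i.1 + 1) i.isLt, pfx (Y ω) i.1 i.isLt.le, W ω))
      = condent μ (fun ω => Y ω i)
          (fun ω => (pfx (X ω) (i.1 + 1) i.isLt, pfx (Y ω) i.1 i.isLt.le))) :
    mi μ W Y = dirinfo μ X Y - dirinfoCond μ X Y W := by
  classical
  -- Step 1: termwise reduction of the RHS using the Markov condition
  have key : ∀ i : Fin n,
      cmi μ (fun ω => pfx (X ω) (i.1 + 1) i.isLt) (fun ω => Y ω i)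
          (fun ω => pfx (Y ω) i.1 i.isLt.le)
      - cmi μ (fun ω => pfx (X ω) (i.1 + 1) i.isLt) (fun ω => Y ω i)
          (fun ω => (pfx (Y ω) i.1 i.isLt.le, W ω))
      = condent μ (fun ω => Y ω i) (fun ω => pfx (Y ω) i.1 i.isLt.le)
        - condent μ (fun ω => Y ω i) (fun ω => (pfx (Y ω) i.1 i.isLt.le, W ω)) := by
    intro i
    have hM := hMarkov i
    unfold cmi condent at *
    have h1 : ent μ (fun ω => ((pfx (X ω) (i.1 + 1) i.isLt, Y ω i),
          pfx (Y ω) i.1 i.isLt.le))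
        = ent μ (fun ω => (Y ω i,
            (pfx (X ω) (i.1 + 1) i.isLt, pfx (Y ω) i.1 i.isLt.le))) := by
      exact ent_comp_inj' μ (fun ω => (Y ω i,
          (pfx (X ω) (i.1 + 1) i.isLt, pfx (Y ω) i.1 i.isLt.le)))
        (fun ω => ((pfx (X ω) (i.1 + 1) i.isLt, Y ω i), pfx (Y ω) i.1 i.isLt.le))
        (fun p => ((p.2.1, p.1), p.2.2))
        (by intro p q h; simp only [Prod.mk.injEq] at h
            exact Prod.ext h.1.2 (Prod.ext h.1.1 h.2))
        (fun ω => rfl)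
    have h2 : ent μ (fun ω => ((pfx (X ω) (i.1 + 1) i.isLt, Y ω i),
          (pfx (Y ω) i.1 i.isLt.le, W ω)))
        = ent μ (fun ω => (Y ω i,
            (pfx (X ω) (i.1 + 1) i.isLt, pfx (Y ω) i.1 i.isLt.le, W ω))) := by
      exact ent_comp_inj' μ (fun ω => (Y ω i,
          (pfx (X ω) (i.1 + 1) i.isLt, pfx (Y ω) i.1 i.isLt.le, W ω)))
        (fun ω => ((pfx (X ω) (i.1 + 1) i.isLt, Y ω i),
          (pfx (Y ω) i.1 i.isLt.le, W ω)))
        (fun p => ((p.2.1, p.1), p.2.2))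
        (by intro p q h; simp only [Prod.mk.injEq] at h
            exact Prod.ext h.1.2 (Prod.ext h.1.1 h.2))
        (fun ω => rfl)
    linarith [hM, h1, h2]
  have hRHS : dirinfo μ X Y - dirinfoCond μ X Y W
      = ∑ i : Fin n,
          (condent μ (fun ω => Y ω i) (fun ω => pfx (Y ω) i.1 i.isLt.le)
           - condent μ (fun ω => Y ω i) (fun ω => (pfx (Y ω) i.1 i.isLt.le, W ω))) := by
    rw [dirinfo, dirinfoCond, ← Finset.sum_sub_distrib]
    exact Finset.sum_congr rfl fun i _ => key i
  rw [hRHS]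
  -- Step 2: telescoping sums
  set g : ℕ → ℝ := fun k =>
    if h : k ≤ n then ent μ (fun ω => pfx (Y ω) k h) else 0 with hg
  set f : ℕ → ℝ := fun k =>
    if h : k ≤ n then ent μ (fun ω => (pfx (Y ω) k h, W ω)) else 0 with hf
  have hterm : ∀ i : Fin n,
      condent μ (fun ω => Y ω i) (fun ω => pfx (Y ω) i.1 i.isLt.le)
        - condent μ (fun ω => Y ω i) (fun ω => (pfx (Y ω) i.1 i.isLt.le, W ω))
      = (g (i.1 + 1) - g i.1) - (f (i.1 + 1) - f i.1) := by
    intro i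
    have hgs : g (i.1 + 1) = ent μ (fun ω => pfx (Y ω) (i.1 + 1) i.isLt) := by
      rw [hg]; exact dif_pos i.isLt
    have hgi : g i.1 = ent μ (fun ω => pfx (Y ω) i.1 i.isLt.le) := by
      rw [hg]; exact dif_pos i.isLt.le
    have hfs : f (i.1 + 1)
        = ent μ (fun ω => (pfx (Y ω) (i.1 + 1) i.isLt, W ω)) := by
      rw [hf]; exact dif_pos i.isLt
    have hfi : f i.1 = ent μ (fun ω => (pfx (Y ω) i.1 i.isLt.le, W ω)) := by
      rw [hf]; exact dif_pos i.isLt.le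
    have e1 : ent μ (fun ω => (Y ω i, pfx (Y ω) i.1 i.isLt.le))
        = ent μ (fun ω => pfx (Y ω) (i.1 + 1) i.isLt) := by
      exact ent_comp_inj' μ (fun ω => pfx (Y ω) (i.1 + 1) i.isLt)
        (fun ω => (Y ω i, pfx (Y ω) i.1 i.isLt.le))
        (fun v : Fin (i.1 + 1) → β =>
          (v (Fin.last i.1), fun j : Fin i.1 => v j.castSucc))
        (by
          intro p q h
          simp only [Prod.mk.injEq] at h
          funext j
          refine Fin.lastCases ?_ (fun j => ?_) j
          · exact h.1
          · exact congrFun h.2 j)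
        (fun ω => Prod.ext (congrArg (Y ω) (Fin.ext rfl))
          (funext fun j => congrArg (Y ω) (Fin.ext rfl)))
    have e2 : ent μ (fun ω => (Y ω i, (pfx (Y ω) i.1 i.isLt.le, W ω)))
        = ent μ (fun ω => (pfx (Y ω) (i.1 + 1) i.isLt, W ω)) := by
      exact ent_comp_inj' μ (fun ω => (pfx (Y ω) (i.1 + 1) i.isLt, W ω))
        (fun ω => (Y ω i, (pfx (Y ω) i.1 i.isLt.le, W ω)))
        (fun p : (Fin (i.1 + 1) → β) × γ =>
          (p.1 (Fin.last i.1), (fun j : Fin i.1 => p.1 j.castSucc, p.2)))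
        (by
          intro p q h
          simp only [Prod.mk.injEq] at h
          refine Prod.ext ?_ h.2.2
          funext j
          refine Fin.lastCases ?_ (fun j => ?_) j
          · exact h.1
          · exact congrFun h.2.1 j)
        (fun ω => Prod.ext (congrArg (Y ω) (Fin.ext rfl))
          (Prod.ext (funext fun j => congrArg (Y ω) (Fin.ext rfl)) rfl))
    unfold condent
    rw [hgs, hgi, hfs, hfi, e1, e2]
  rw [Finset.sum_congr rfl fun i _ => hterm i]
  have htel : ∑ i : Fin n,
      ((g (i.1 + 1) - g i.1) - (f (i.1 + 1) - f i.1))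
      = (g n - g 0) - (f n - f 0) := by
    rw [Fin.sum_univ_eq_sum_range (fun k => (g (k + 1) - g k) - (f (k + 1) - f k)),
      Finset.sum_sub_distrib, Finset.sum_range_sub g, Finset.sum_range_sub f]
  rw [htel]
  -- Step 3: boundary values
  have hgn : g n = ent μ Y := by
    simp only [hg]
    rw [dif_pos le_rfl]
    congr 1
  have hg0 : g 0 = 0 := by
    simp only [hg]
    rw [dif_pos (Nat.zero_le n)]
    exact ent_unique μ hμ1 _
  have hfn : f n = ent μ (fun ω => (Y ω, W ω)) := by
    simp only [hf]
    rw [dif_pos le_rfl]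
    congr 1
  have hf0 : f 0 = ent μ W := by
    simp only [hf]
    rw [dif_pos (Nat.zero_le n)]
    have heq : (fun ω => (pfx (Y ω) 0 (Nat.zero_le n), W ω))
        = fun ω => ((fun w : γ => ((default : Fin 0 → β), w)) (W ω)) := by
      funext ω
      exact Prod.ext (Subsingleton.elim _ _) rfl
    rw [heq]
    exact ent_comp_inj μ W (fun w : γ => ((default : Fin 0 → β), w))
      (by intro a b h; simpa using h)
  have hswap : ent μ (fun ω => (W ω, Y ω)) = ent μ (fun ω => (Y ω, W ω)) := by
    exact ent_comp_inj' μ (fun ω => (Y ω, W ω)) (fun ω => (W ω, Y ω))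
      Prod.swap Prod.swap_injective (fun ω => rfl)
  rw [hgn, hg0, hfn, hf0]
  unfold mi
  rw [hswap]
  ring
end NFB
end

section
/- Massey's inequality: for any finite random variables X^n and Y^n, ∑_{i=1}^n I(X^i; Y_i | Y^{i-1}) ≤ I(X^n; Y^n), i.e., directed information is bounded above by mutual information. -/
/-!
By the chain rule, `I(Xⁿ; Yⁿ) = ∑ᵢ I(Xⁿ; Yᵢ | Yⁱ⁻¹)`. Since `Xⁱ` is a function of `Xⁿ`, each
summand dominates `I(Xⁱ; Yᵢ | Yⁱ⁻¹)`: conditional mutual information can only decrease when the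
first variable is replaced by a function of it, which reduces to the nonnegativity of conditional
mutual information, i.e. Gibbs' inequality.
-/

open Finset

namespace NFB

variable {Ω : Type*} [Fintype Ω]

section Entropy

open Real

variable (μ : Ω → ℝ) {α β γ δ : Type*} [Fintype α] [DecidableEq α]
  [Fintype β] [DecidableEq β] [Fintype γ] [DecidableEq γ] [Fintype δ] [DecidableEq δ]

lemma pr_nonneg (hμ0 : ∀ ω, 0 ≤ μ ω) (X : Ω → α) (a : α) : 0 ≤ pr μ X a :=
  sum_nonneg fun ω _ => hμ0 ω

lemma sum_pr (hμ1 : ∑ ω, μ ω = 1) (X : Ω → α) : ∑ a, pr μ X a = 1 := by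
  rw [← hμ1]
  exact sum_fiberwise _ _ _

lemma sum_pr_mul (X : Ω → α) (g : α → ℝ) :
    ∑ a, pr μ X a * g a = ∑ ω, μ ω * g (X ω) := by
  simp only [pr, sum_mul]
  rw [← sum_fiberwise univ X (fun ω => μ ω * g (X ω))]
  refine sum_congr rfl fun a _ => sum_congr rfl fun ω hω => ?_
  rw [(mem_filter.1 hω).2]

lemma pr_le_pr_comp (hμ0 : ∀ ω, 0 ≤ μ ω) (X : Ω → α) (F : α → β) (a : α) :
    pr μ X a ≤ pr μ (fun ω => F (X ω)) (F a) :=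
  sum_le_sum_of_subset_of_nonneg (monotone_filter_right _ fun _ _ h => congrArg F h)
    fun ω _ _ => hμ0 ω

lemma pr_comp_of_injective (X : Ω → α) {f : α → β} (hf : Function.Injective f) (a : α) :
    pr μ (fun ω => f (X ω)) (f a) = pr μ X a := by
  simp only [pr, hf.eq_iff]

lemma sum_pr_prodMk_left (A : Ω → α) (B : Ω → β) (b : β) :
    ∑ a, pr μ (fun ω => (A ω, B ω)) (a, b) = pr μ B b := by
  rw [pr, ← sum_fiberwise _ A μ]
  simp only [pr, filter_filter, Prod.mk.injEq, and_comm]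

lemma ent_comp (X : Ω → α) (F : α → β) :
    ent μ (fun ω => F (X ω)) =
      -∑ a, pr μ X a * logb 2 (pr μ (fun ω => F (X ω)) (F a)) := by
  rw [ent, sum_neg_distrib, sum_pr_mul, sum_pr_mul]

lemma ent_comp_of_injective (X : Ω → α) {f : α → β} (hf : Function.Injective f) :
    ent μ (fun ω => f (X ω)) = ent μ X := by
  rw [ent_comp, ent, sum_neg_distrib]
  simp only [pr_comp_of_injective μ X hf]

lemma ent_of_unique {κ : Type*} [Fintype κ] [DecidableEq κ] [Unique κ]
    (hμ1 : ∑ ω, μ ω = 1) (C : Ω → κ) : ent μ C = 0 := by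
  have h : pr μ C default = 1 := by
    rw [pr, filter_true_of_mem fun ω _ => Unique.eq_default _, hμ1]
  simp [ent, h]

lemma sum_mul_logb_le_sum_mul_logb {ι : Type*} [Fintype ι] (p q : ι → ℝ)
    (hp : ∀ i, 0 ≤ p i) (hq : ∀ i, 0 ≤ q i) (hpq : ∀ i, p i ≠ 0 → q i ≠ 0)
    (hsum : ∑ i, q i ≤ ∑ i, p i) :
    ∑ i, p i * logb 2 (q i) ≤ ∑ i, p i * logb 2 (p i) := by
  have hlog2 : 0 < log 2 := log_pos one_lt_two
  have hterm : ∀ i, p i * logb 2 (q i) - p i * logb 2 (p i) ≤ (q i - p i) / log 2 := by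
    intro i
    rcases (hp i).eq_or_lt with h0 | h0
    · simpa [← h0] using div_nonneg (hq i) hlog2.le
    have hqi : 0 < q i := (hq i).lt_of_ne (hpq i h0.ne').symm
    rw [le_div_iff₀ hlog2, logb, logb, ← mul_sub, div_sub_div_same, ← log_div hqi.ne' h0.ne',
      mul_div_assoc', div_mul_cancel₀ _ hlog2.ne']
    calc p i * log (q i / p i) ≤ p i * (q i / p i - 1) :=
          mul_le_mul_of_nonneg_left (log_le_sub_one_of_pos (div_pos hqi h0)) h0.le
      _ = q i - p i := by field_simp
  have hle := sum_le_sum fun i (_ : i ∈ univ) => hterm i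
  rw [sum_sub_distrib, ← sum_div, sum_sub_distrib] at hle
  have hnonpos : (∑ i, q i - ∑ i, p i) / log 2 ≤ 0 :=
    div_nonpos_of_nonpos_of_nonneg (by linarith) hlog2.le
  linarith

lemma sum_pr_mul_pr_div_pr (hμ1 : ∑ ω, μ ω = 1) (X : Ω → α) (Z : Ω → γ) (W : Ω → δ) :
    ∑ c : (α × γ) × δ, pr μ (fun ω => (X ω, W ω)) (c.1.1, c.2) *
      pr μ (fun ω => (Z ω, W ω)) (c.1.2, c.2) / pr μ W c.2 = 1 := by
  calc _ = ∑ w, (∑ x, pr μ (fun ω => (X ω, W ω)) (x, w)) *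
        (∑ z, pr μ (fun ω => (Z ω, W ω)) (z, w)) / pr μ W w := by
        rw [Fintype.sum_prod_type_right]
        simp only [Fintype.sum_prod_type, sum_mul_sum, sum_div]
    _ = ∑ w, pr μ W w := by simp only [sum_pr_prodMk_left, mul_self_div_self]
    _ = 1 := sum_pr μ hμ1 W

lemma cmi_nonneg (hμ0 : ∀ ω, 0 ≤ μ ω) (hμ1 : ∑ ω, μ ω = 1)
    (X : Ω → α) (Z : Ω → γ) (W : Ω → δ) : 0 ≤ cmi μ X Z W := by
  set V : Ω → (α × γ) × δ := fun ω => ((X ω, Z ω), W ω)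
  set p := pr μ V
  set qXW := pr μ (fun ω => (X ω, W ω))
  set qZW := pr μ (fun ω => (Z ω, W ω))
  set qW := pr μ W
  have hXW : ent μ (fun ω => (X ω, W ω)) = -∑ c, p c * logb 2 (qXW (c.1.1, c.2)) :=
    ent_comp μ V fun c => (c.1.1, c.2)
  have hZW : ent μ (fun ω => (Z ω, W ω)) = -∑ c, p c * logb 2 (qZW (c.1.2, c.2)) :=
    ent_comp μ V fun c => (c.1.2, c.2)
  have hW : ent μ W = -∑ c, p c * logb 2 (qW c.2) := ent_comp μ V fun c => c.2
  have hV : ent μ V = -∑ c, p c * logb 2 (p c) := by rw [ent, sum_neg_distrib]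
  -- Under `Q`, `X` and `Z` are conditionally independent given `W`;
  -- `cmi μ X Z W` is the Kullback-Leibler divergence of `p` from `Q`.
  set Q : (α × γ) × δ → ℝ := fun c => qXW (c.1.1, c.2) * qZW (c.1.2, c.2) / qW c.2
  have hpos : ∀ c, 0 < p c → 0 < qXW (c.1.1, c.2) ∧ 0 < qZW (c.1.2, c.2) ∧ 0 < qW c.2 :=
    fun c hc => ⟨hc.trans_le (pr_le_pr_comp μ hμ0 V (fun c => (c.1.1, c.2)) c),
      hc.trans_le (pr_le_pr_comp μ hμ0 V (fun c => (c.1.2, c.2)) c),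
      hc.trans_le (pr_le_pr_comp μ hμ0 V (fun c => c.2) c)⟩
  have hterm : ∀ c, p c * logb 2 (p c) + p c * logb 2 (qW c.2) - p c * logb 2 (qXW (c.1.1, c.2))
      - p c * logb 2 (qZW (c.1.2, c.2)) = p c * logb 2 (p c) - p c * logb 2 (Q c) := by
    intro c
    rcases (pr_nonneg μ hμ0 V c).eq_or_lt with h0 | h0
    · simp [p, ← h0]
    obtain ⟨h1, h2, h3⟩ := hpos c h0
    rw [logb_div (by positivity) h3.ne', logb_mul h1.ne' h2.ne']
    ring
  have hcmi : cmi μ X Z W = ∑ c, p c * logb 2 (p c) - ∑ c, p c * logb 2 (Q c) := by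
    simp only [cmi, condent]
    rw [hXW, hZW, hW, hV, ← sum_sub_distrib, ← sum_congr rfl fun c _ => hterm c]
    simp only [sum_add_distrib, sum_sub_distrib]
    ring
  have hgibbs := sum_mul_logb_le_sum_mul_logb p Q (pr_nonneg μ hμ0 V)
    (fun c => div_nonneg (mul_nonneg (pr_nonneg μ hμ0 _ _) (pr_nonneg μ hμ0 _ _))
      (pr_nonneg μ hμ0 _ _))
    (fun c hc => by
      obtain ⟨h1, h2, h3⟩ := hpos c ((pr_nonneg μ hμ0 V c).lt_of_ne' hc)
      positivity)
    (by rw [sum_pr_mul_pr_div_pr μ hμ1, sum_pr μ hμ1])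
  linarith

lemma cmi_comp_left_le (hμ0 : ∀ ω, 0 ≤ μ ω) (hμ1 : ∑ ω, μ ω = 1)
    (X : Ω → α) (Z : Ω → γ) (W : Ω → δ) (g : α → β) :
    cmi μ (fun ω => g (X ω)) Z W ≤ cmi μ X Z W := by
  -- `I(X; Z | g X, W) = I(X; Z | W) - I(g X; Z | W)` because `g X` is determined by `X`.
  have h0 := cmi_nonneg μ hμ0 hμ1 X Z fun ω => (g (X ω), W ω)
  have e1 : ent μ (fun ω => (X ω, (g (X ω), W ω))) = ent μ (fun ω => (X ω, W ω)) :=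
    ent_comp_of_injective μ (fun ω => (X ω, W ω)) (f := fun c => (c.1, (g c.1, c.2)))
      (by rintro ⟨x, w⟩ ⟨x', w'⟩ h; simp_all)
  have e2 : ent μ (fun ω => (Z ω, (g (X ω), W ω))) = ent μ (fun ω => ((g (X ω), Z ω), W ω)) :=
    ent_comp_of_injective μ (fun ω => ((g (X ω), Z ω), W ω))
      (f := fun c => (c.1.2, (c.1.1, c.2))) (by rintro ⟨⟨u, z⟩, w⟩ ⟨⟨u', z'⟩, w'⟩ h; simp_all)
  have e3 : ent μ (fun ω => ((X ω, Z ω), (g (X ω), W ω))) = ent μ (fun ω => ((X ω, Z ω), W ω)) :=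
    ent_comp_of_injective μ (fun ω => ((X ω, Z ω), W ω)) (f := fun c => (c.1, (g c.1.1, c.2)))
      (by rintro ⟨⟨x, z⟩, w⟩ ⟨⟨x', z'⟩, w'⟩ h; simp_all)
  simp only [cmi, condent] at h0 ⊢
  linarith

lemma mi_comp_right_of_injective (X : Ω → α) (Y : Ω → β) {f : β → γ}
    (hf : Function.Injective f) : mi μ X (fun ω => f (Y ω)) = mi μ X Y := by
  have h : ent μ (fun ω => (X ω, f (Y ω))) = ent μ (fun ω => (X ω, Y ω)) :=
    ent_comp_of_injective μ (fun ω => (X ω, Y ω)) (f := Prod.map id f)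
      (Function.Injective.prodMap Function.injective_id hf)
  rw [mi, mi, ent_comp_of_injective μ Y hf, h]

lemma mi_prodMk_eq_mi_add_cmi (X : Ω → α) (Y : Ω → β) (Z : Ω → γ) :
    mi μ X (fun ω => (Y ω, Z ω)) = mi μ X Y + cmi μ X Z Y := by
  have h1 : ent μ (fun ω => (Y ω, Z ω)) = ent μ (fun ω => (Z ω, Y ω)) :=
    ent_comp_of_injective μ (fun ω => (Z ω, Y ω)) (f := Prod.swap) Prod.swap_injective
  have h2 : ent μ (fun ω => (X ω, (Y ω, Z ω))) = ent μ (fun ω => ((X ω, Z ω), Y ω)) :=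
    ent_comp_of_injective μ (fun ω => ((X ω, Z ω), Y ω)) (f := fun c => (c.1.1, (c.2, c.1.2)))
      (by rintro ⟨⟨x, z⟩, y⟩ ⟨⟨x', z'⟩, y'⟩ h; simp_all)
  simp only [mi, cmi, condent]
  linarith

lemma mi_of_unique {κ : Type*} [Fintype κ] [DecidableEq κ] [Unique κ]
    (hμ1 : ∑ ω, μ ω = 1) (X : Ω → α) (C : Ω → κ) : mi μ X C = 0 := by
  obtain rfl : C = fun _ => default := funext fun _ => Unique.eq_default _
  rw [mi, ent_of_unique μ hμ1 fun _ => (default : κ),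
    ent_comp_of_injective μ X (Prod.mk_left_injective (default : κ))]
  ring

lemma mi_eq_sum_cmi (hμ1 : ∑ ω, μ ω = 1) (X : Ω → α) :
    ∀ {k : ℕ} (Y : Ω → Fin k → β),
      mi μ X Y = ∑ i : Fin k, cmi μ X (fun ω => Y ω i) (fun ω => pfx (Y ω) i i.isLt.le)
  | 0, Y => by rw [mi_of_unique μ hμ1, Fin.sum_univ_zero]
  | k + 1, Y => by
    have hsplit : Function.Injective fun y : Fin (k + 1) → β => (Fin.init y, y (Fin.last k)) :=
      fun y y' h => by
        rw [← Fin.snoc_init_self y, ← Fin.snoc_init_self y', (Prod.mk.inj h).1, (Prod.mk.inj h).2]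
    rw [← mi_comp_right_of_injective μ X Y hsplit, mi_prodMk_eq_mi_add_cmi,
      mi_eq_sum_cmi hμ1 X, Fin.sum_univ_castSucc]
    -- prefixes of `Fin.init (Y ω)` are prefixes of `Y ω` up to definitional unfolding
    rfl

end Entropy

/-- Massey's inequality: for any finite random variables `Xⁿ` and
`Yⁿ`, the directed information `∑ᵢ I(Xⁱ; Yᵢ | Yⁱ⁻¹)` is bounded above by the
mutual information `I(Xⁿ; Yⁿ)`. -/
theorem stmt5 {Ω : Type*} [Fintype Ω] (μ : Ω → ℝ)
    (hμ0 : ∀ ω, 0 ≤ μ ω) (hμ1 : ∑ ω, μ ω = 1)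
    {α β : Type*} [Fintype α] [DecidableEq α] [Fintype β] [DecidableEq β]
    {n : ℕ} (X : Ω → Fin n → α) (Y : Ω → Fin n → β) :
    dirinfo μ X Y ≤ mi μ X Y := by
  rw [dirinfo, mi_eq_sum_cmi μ hμ1 X Y]
  exact sum_le_sum fun i _ =>
    cmi_comp_left_le μ hμ0 hμ1 X _ _ fun x => pfx x (i.1 + 1) i.isLt
end NFB
end

section
/- Let F^n be code-functions independent of channel feedback (no feedback from Y to F, i.e., p(f_i|f^{i-1}, y^{i-1}) = p(f_i|f^{i-1})), let X_i = F_i(Z^{i-1}) be determined by (F^i, Z^{i-1}), and suppose the Markov chain F^i − (X^i, Y^{i-1}) − Y_i holds. Then the mutual information density satisfies i(F^n; Y^n) = i(X^n → Y^n) − i(X^n → Y^n ‖ F^n), pointwise on the support of the joint distribution, where i(X^n → Y^n) = log(→p(Y^n|X^n)/p(Y^n)) and i(X^n → Y^n ‖ F^n) = log(→p(Y^n|X^n,F^n)/→p(Y^n|F^n)). -/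
open Finset

namespace NFB

variable {Ω : Type*} [Fintype Ω]

/-! By the chain rule, `p(fⁿ, yⁿ)` factors over time into `p(fᵢ | fⁱ⁻¹, yⁱ⁻¹) · p(yᵢ | fⁱ, yⁱ⁻¹)`.
Without feedback the first factors multiply to `p(fⁿ)`, so `p(fⁿ, yⁿ) / p(fⁿ) = →p(yⁿ | fⁿ)` and
`i(Fⁿ; Yⁿ) = log (→p(Yⁿ | Fⁿ) / p(Yⁿ))`. The Markov chain turns `→p(Yⁿ | Xⁿ, Fⁿ)` into
`→p(Yⁿ | Xⁿ)`, so the difference of the two directed-information densities collapses to that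
same quantity. -/

lemma pfx_eq_pfx_iff {γ : Type*} {n : ℕ} (u v : Fin n → γ) {i : ℕ} (h : i ≤ n) :
    pfx u i h = pfx v i h ↔ ∀ j : Fin n, j.1 < i → u j = v j :=
  ⟨fun he j hj => congrFun he ⟨j.1, hj⟩, fun he => funext fun j => he _ j.isLt⟩

lemma eq_and_pfx_eq_iff {γ : Type*} {n : ℕ} (u v : Fin n → γ) (i : Fin n) :
    (u i = v i ∧ pfx u i.1 i.isLt.le = pfx v i.1 i.isLt.le) ↔
      ∀ j : Fin n, j.1 < i.1 + 1 → u j = v j := by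
  rw [pfx_eq_pfx_iff]
  refine ⟨fun ⟨hi, hlt⟩ j hj => ?_, fun he => ⟨he i i.1.lt_succ_self,
    fun j hj => he j (Nat.lt_succ_of_lt hj)⟩⟩
  rcases Nat.lt_succ_iff_lt_or_eq.mp hj with hj | hj
  · exact hlt j hj
  · rwa [Fin.ext hj]

lemma pfx_succ_eq_pfx_succ_iff {γ : Type*} {n : ℕ} (u v : Fin n → γ) (i : Fin n) :
    pfx u (i.1 + 1) i.isLt = pfx v (i.1 + 1) i.isLt ↔
      (u i = v i ∧ pfx u i.1 i.isLt.le = pfx v i.1 i.isLt.le) := by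
  rw [eq_and_pfx_eq_iff, pfx_eq_pfx_iff]

section Probability

variable (μ : Ω → ℝ)

lemma pr_congr {α α' : Type*} [Fintype α] [DecidableEq α] [Fintype α'] [DecidableEq α']
    {X : Ω → α} {X' : Ω → α'} {a : α} {a' : α'} (h : ∀ ω, X ω = a ↔ X' ω = a') :
    pr μ X a = pr μ X' a' := by
  unfold pr
  congr 1
  ext ω
  simp [h ω]

lemma condpr_congr {α α' β β' : Type*} [Fintype α] [DecidableEq α]
    [Fintype α'] [DecidableEq α'] [Fintype β] [DecidableEq β] [Fintype β'] [DecidableEq β']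
    {X : Ω → α} {X' : Ω → α'} {Y : Ω → β} {Y' : Ω → β'} {a : α} {a' : α'} {b : β} {b' : β'}
    (hX : ∀ ω, X ω = a ↔ X' ω = a') (hY : ∀ ω, Y ω = b ↔ Y' ω = b') :
    condpr μ X Y a b = condpr μ X' Y' a' b' := by
  unfold condpr
  rw [pr_congr μ (X' := fun ω => (X' ω, Y' ω)) (a' := (a', b'))
    (fun ω => by simp [Prod.ext_iff, hX ω, hY ω]), pr_congr μ hY]

lemma condpr_pair_eq_mul {α β γ : Type*} [Fintype α] [DecidableEq α] [Fintype β]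
    [DecidableEq β] [Fintype γ] [DecidableEq γ] (A : Ω → α) (B : Ω → β) (C : Ω → γ)
    (a : α) (b : β) (c : γ) (h : pr μ (fun ω => (A ω, C ω)) (a, c) ≠ 0) :
    condpr μ (fun ω => (A ω, B ω)) C (a, b) c =
      condpr μ A C a c * condpr μ B (fun ω => (A ω, C ω)) b (a, c) := by
  unfold condpr
  rw [div_mul_div_cancel₀' h]
  congr 1
  exact pr_congr μ fun ω => by simp only [Prod.mk.injEq]; tauto

variable {μ} (hμ0 : ∀ ω, 0 ≤ μ ω)
include hμ0

lemma pr_pos {α : Type*} [Fintype α] [DecidableEq α] (X : Ω → α) {ω : Ω} (hω : 0 < μ ω) :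
    0 < pr μ X (X ω) :=
  hω.trans_le (Finset.single_le_sum (fun ω' _ => hμ0 ω') (by simp))

lemma condpr_pos {α β : Type*} [Fintype α] [DecidableEq α] [Fintype β] [DecidableEq β]
    (X : Ω → α) (Y : Ω → β) {ω : Ω} (hω : 0 < μ ω) : 0 < condpr μ X Y (X ω) (Y ω) :=
  div_pos (pr_pos hμ0 (fun ω' => (X ω', Y ω')) hω) (pr_pos hμ0 Y hω)

lemma pr_eq_prod_condpr (hμ1 : ∑ ω, μ ω = 1) {γ : Type*} [Fintype γ] [DecidableEq γ]
    {n : ℕ} (W : Ω → Fin n → γ) {ω : Ω} (hω : 0 < μ ω) :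
    pr μ W (W ω) = ∏ i : Fin n, condpr μ (fun ω' => W ω' i)
      (fun ω' => pfx (W ω') i.1 i.isLt.le) (W ω i) (pfx (W ω) i.1 i.isLt.le) := by
  set S : ℕ → ℝ := fun k =>
    ∑ ω' ∈ univ.filter (fun ω' => ∀ j : Fin n, j.1 < k → W ω' j = W ω j), μ ω' with hS
  have hS_pos : ∀ k, 0 < S k := fun k =>
    hω.trans_le (Finset.single_le_sum (fun ω' _ => hμ0 ω') (by simp))
  have hS_zero : S 0 = 1 := by simp [hS, hμ1]
  have hS_n : pr μ W (W ω) = S n := by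
    unfold pr
    congr 1
    ext ω'
    simp [funext_iff]
  have hfactor : ∀ i : Fin n, condpr μ (fun ω' => W ω' i)
      (fun ω' => pfx (W ω') i.1 i.isLt.le) (W ω i) (pfx (W ω) i.1 i.isLt.le) =
      S (i.1 + 1) / S i.1 := by
    intro i
    unfold condpr pr
    congr 2 <;> ext ω'
    · simp only [mem_filter, mem_univ, true_and, Prod.mk.injEq, eq_and_pfx_eq_iff]
    · simp only [mem_filter, mem_univ, true_and, pfx_eq_pfx_iff]
  rw [hS_n, Finset.prod_congr rfl fun i _ => hfactor i,
    Fin.prod_univ_eq_prod_range (fun k => S (k + 1) / S k)]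
  exact (Finset.prod_range_induction _ S hS_zero n
    fun k _ => (mul_div_cancel₀ _ (hS_pos k).ne').symm).symm

variable (hμ1 : ∑ ω, μ ω = 1)
variable {φ β : Type*} [Fintype φ] [DecidableEq φ] [Fintype β] [DecidableEq β] {n : ℕ}
  (F : Ω → Fin n → φ) (Y : Ω → Fin n → β)
include hμ1

lemma pr_pair_eq_prod_condpr_mul_condpr {ω : Ω} (hω : 0 < μ ω) :
    pr μ (fun ω' => (F ω', Y ω')) (F ω, Y ω) =
      ∏ i : Fin n,
        (condpr μ (fun ω' => F ω' i)
            (fun ω' => (pfx (F ω') i.1 i.isLt.le, pfx (Y ω') i.1 i.isLt.le))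
            (F ω i) (pfx (F ω) i.1 i.isLt.le, pfx (Y ω) i.1 i.isLt.le) *
          condpr μ (fun ω' => Y ω' i)
            (fun ω' => (pfx (F ω') (i.1 + 1) i.isLt, pfx (Y ω') i.1 i.isLt.le))
            (Y ω i) (pfx (F ω) (i.1 + 1) i.isLt, pfx (Y ω) i.1 i.isLt.le)) := by
  set W : Ω → Fin n → φ × β := fun ω' i => (F ω' i, Y ω' i)
  have hpfxW : ∀ (i : Fin n) ω', pfx (W ω') i.1 i.isLt.le = pfx (W ω) i.1 i.isLt.le ↔
      (pfx (F ω') i.1 i.isLt.le, pfx (Y ω') i.1 i.isLt.le) =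
        (pfx (F ω) i.1 i.isLt.le, pfx (Y ω) i.1 i.isLt.le) := fun i ω' => by
    simp only [pfx_eq_pfx_iff, Prod.mk.injEq, W, ← forall_and]
  rw [pr_congr μ (X' := W) (a' := W ω) fun ω' => by simp [W, funext_iff, forall_and],
    pr_eq_prod_condpr hμ0 hμ1 W hω]
  refine Finset.prod_congr rfl fun i _ => ?_
  rw [condpr_congr μ (fun _ => Iff.rfl) (hpfxW i),
    condpr_pair_eq_mul μ _ _ _ _ _ _ (pr_pos hμ0 _ hω).ne']
  congr 1
  refine condpr_congr μ (fun _ => Iff.rfl) fun ω' => ?_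
  simp only [Prod.mk.injEq, pfx_succ_eq_pfx_succ_iff, and_assoc]

lemma pr_pair_eq_pr_mul_prod_condpr_of_no_feedback {ω : Ω} (hω : 0 < μ ω)
    (hnofb : ∀ i : Fin n,
      condpr μ (fun ω' => F ω' i)
        (fun ω' => (pfx (F ω') i.1 i.isLt.le, pfx (Y ω') i.1 i.isLt.le))
        (F ω i) (pfx (F ω) i.1 i.isLt.le, pfx (Y ω) i.1 i.isLt.le)
      = condpr μ (fun ω' => F ω' i) (fun ω' => pfx (F ω') i.1 i.isLt.le)
          (F ω i) (pfx (F ω) i.1 i.isLt.le)) :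
    pr μ (fun ω' => (F ω', Y ω')) (F ω, Y ω) =
      pr μ F (F ω) * ∏ i : Fin n, condpr μ (fun ω' => Y ω' i)
        (fun ω' => (pfx (F ω') (i.1 + 1) i.isLt, pfx (Y ω') i.1 i.isLt.le))
        (Y ω i) (pfx (F ω) (i.1 + 1) i.isLt, pfx (Y ω) i.1 i.isLt.le) := by
  rw [pr_pair_eq_prod_condpr_mul_condpr hμ0 hμ1 F Y hω, Finset.prod_mul_distrib,
    pr_eq_prod_condpr hμ0 hμ1 F hω, Finset.prod_congr rfl fun i _ => hnofb i]

end Probability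

theorem stmt15_general {Ω : Type*} [Fintype Ω] (μ : Ω → ℝ)
    (hμ0 : ∀ ω, 0 ≤ μ ω) (hμ1 : ∑ ω, μ ω = 1)
    {α β φ : Type*} [Fintype α] [DecidableEq α] [Fintype β] [DecidableEq β]
    [Fintype φ] [DecidableEq φ]
    {n : ℕ} (F : Ω → Fin n → φ) (X : Ω → Fin n → α) (Y : Ω → Fin n → β)
    (hnofb : ∀ i : Fin n, ∀ ω, 0 < μ ω →
      condpr μ (fun ω' => F ω' i)
        (fun ω' => (pfx (F ω') i.1 i.isLt.le, pfx (Y ω') i.1 i.isLt.le))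
        (F ω i) (pfx (F ω) i.1 i.isLt.le, pfx (Y ω) i.1 i.isLt.le)
      = condpr μ (fun ω' => F ω' i) (fun ω' => pfx (F ω') i.1 i.isLt.le)
          (F ω i) (pfx (F ω) i.1 i.isLt.le))
    (hMarkov : ∀ i : Fin n, ∀ ω, 0 < μ ω →
      condpr μ (fun ω' => Y ω' i)
        (fun ω' => (pfx (F ω') (i.1 + 1) i.isLt, pfx (X ω') (i.1 + 1) i.isLt,
          pfx (Y ω') i.1 i.isLt.le))
        (Y ω i)
        (pfx (F ω) (i.1 + 1) i.isLt, pfx (X ω) (i.1 + 1) i.isLt,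
          pfx (Y ω) i.1 i.isLt.le)
      = condpr μ (fun ω' => Y ω' i)
          (fun ω' => (pfx (X ω') (i.1 + 1) i.isLt, pfx (Y ω') i.1 i.isLt.le))
          (Y ω i)
          (pfx (X ω) (i.1 + 1) i.isLt, pfx (Y ω) i.1 i.isLt.le)) :
    ∀ ω, 0 < μ ω →
      Real.logb 2 (pr μ (fun ω' => (F ω', Y ω')) (F ω, Y ω)
          / (pr μ F (F ω) * pr μ Y (Y ω)))
      = Real.logb 2
          ((∏ i : Fin n, condpr μ (fun ω' => Y ω' i)
              (fun ω' => (pfx (X ω') (i.1 + 1) i.isLt, pfx (Y ω') i.1 i.isLt.le))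
              (Y ω i)
              (pfx (X ω) (i.1 + 1) i.isLt, pfx (Y ω) i.1 i.isLt.le))
            / pr μ Y (Y ω))
        - Real.logb 2
          ((∏ i : Fin n, condpr μ (fun ω' => Y ω' i)
              (fun ω' => (pfx (X ω') (i.1 + 1) i.isLt, pfx (F ω') (i.1 + 1) i.isLt,
                pfx (Y ω') i.1 i.isLt.le))
              (Y ω i)
              (pfx (X ω) (i.1 + 1) i.isLt, pfx (F ω) (i.1 + 1) i.isLt,
                pfx (Y ω) i.1 i.isLt.le))
            / (∏ i : Fin n, condpr μ (fun ω' => Y ω' i)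
              (fun ω' => (pfx (F ω') (i.1 + 1) i.isLt, pfx (Y ω') i.1 i.isLt.le))
              (Y ω i)
              (pfx (F ω) (i.1 + 1) i.isLt, pfx (Y ω) i.1 i.isLt.le))) := by
  intro ω hω
  have hY : 0 < pr μ Y (Y ω) := pr_pos hμ0 Y hω
  have hXY : 0 < ∏ i : Fin n, condpr μ (fun ω' => Y ω' i)
      (fun ω' => (pfx (X ω') (i.1 + 1) i.isLt, pfx (Y ω') i.1 i.isLt.le))
      (Y ω i) (pfx (X ω) (i.1 + 1) i.isLt, pfx (Y ω) i.1 i.isLt.le) :=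
    Finset.prod_pos fun i _ => condpr_pos hμ0 _ _ hω
  have hFY : 0 < ∏ i : Fin n, condpr μ (fun ω' => Y ω' i)
      (fun ω' => (pfx (F ω') (i.1 + 1) i.isLt, pfx (Y ω') i.1 i.isLt.le))
      (Y ω i) (pfx (F ω) (i.1 + 1) i.isLt, pfx (Y ω) i.1 i.isLt.le) :=
    Finset.prod_pos fun i _ => condpr_pos hμ0 _ _ hω
  have hXFY_eq_XY : ∏ i : Fin n, condpr μ (fun ω' => Y ω' i)
      (fun ω' => (pfx (X ω') (i.1 + 1) i.isLt, pfx (F ω') (i.1 + 1) i.isLt,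
        pfx (Y ω') i.1 i.isLt.le))
      (Y ω i)
      (pfx (X ω) (i.1 + 1) i.isLt, pfx (F ω) (i.1 + 1) i.isLt, pfx (Y ω) i.1 i.isLt.le) =
      ∏ i : Fin n, condpr μ (fun ω' => Y ω' i)
        (fun ω' => (pfx (X ω') (i.1 + 1) i.isLt, pfx (Y ω') i.1 i.isLt.le))
        (Y ω i) (pfx (X ω) (i.1 + 1) i.isLt, pfx (Y ω) i.1 i.isLt.le) := by
    refine Finset.prod_congr rfl fun i _ => ?_
    rw [← hMarkov i ω hω]
    exact condpr_congr μ (fun _ => Iff.rfl) fun _ => by simp only [Prod.mk.injEq]; tauto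
  rw [pr_pair_eq_pr_mul_prod_condpr_of_no_feedback hμ0 hμ1 F Y hω fun i => hnofb i ω hω,
    mul_div_mul_left _ _ (pr_pos hμ0 F hω).ne', hXFY_eq_XY, Real.logb_div hFY.ne' hY.ne',
    Real.logb_div hXY.ne' hY.ne', Real.logb_div hXY.ne' hFY.ne']
  ring

/-- with code-functions `Fⁿ` chosen without feedback, inputs
`Xᵢ` determined by `(Fⁱ, Zⁱ⁻¹)`, and the Markov chain `Fⁱ − (Xⁱ, Yⁱ⁻¹) − Yᵢ`,
the mutual information density satisfies, pointwise on the support,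
`i(Fⁿ; Yⁿ) = i(Xⁿ → Yⁿ) − i(Xⁿ → Yⁿ ‖ Fⁿ)`. -/
theorem stmt15 {Ω : Type*} [Fintype Ω] (μ : Ω → ℝ)
    (hμ0 : ∀ ω, 0 ≤ μ ω) (hμ1 : ∑ ω, μ ω = 1)
    {α β ζ φ : Type*} [Fintype α] [DecidableEq α] [Fintype β] [DecidableEq β]
    [Fintype ζ] [DecidableEq ζ] [Fintype φ] [DecidableEq φ]
    {n : ℕ} (F : Ω → Fin n → φ) (X : Ω → Fin n → α) (Y : Ω → Fin n → β)
    (Z : Ω → Fin n → ζ)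
    (hX : ∀ i : Fin n, ∃ g : (Fin (i.1 + 1) → φ) × (Fin i.1 → ζ) → α,
      ∀ ω, X ω i = g (pfx (F ω) (i.1 + 1) i.isLt, pfx (Z ω) i.1 i.isLt.le))
    (hnofb : ∀ i : Fin n, ∀ ω, 0 < μ ω →
      condpr μ (fun ω' => F ω' i)
        (fun ω' => (pfx (F ω') i.1 i.isLt.le, pfx (Y ω') i.1 i.isLt.le))
        (F ω i) (pfx (F ω) i.1 i.isLt.le, pfx (Y ω) i.1 i.isLt.le)
      = condpr μ (fun ω' => F ω' i) (fun ω' => pfx (F ω') i.1 i.isLt.le)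
          (F ω i) (pfx (F ω) i.1 i.isLt.le))
    (hMarkov : ∀ i : Fin n, ∀ ω, 0 < μ ω →
      condpr μ (fun ω' => Y ω' i)
        (fun ω' => (pfx (F ω') (i.1 + 1) i.isLt, pfx (X ω') (i.1 + 1) i.isLt,
          pfx (Y ω') i.1 i.isLt.le))
        (Y ω i)
        (pfx (F ω) (i.1 + 1) i.isLt, pfx (X ω) (i.1 + 1) i.isLt,
          pfx (Y ω) i.1 i.isLt.le)
      = condpr μ (fun ω' => Y ω' i)
          (fun ω' => (pfx (X ω') (i.1 + 1) i.isLt, pfx (Y ω') i.1 i.isLt.le))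
          (Y ω i)
          (pfx (X ω) (i.1 + 1) i.isLt, pfx (Y ω) i.1 i.isLt.le)) :
    ∀ ω, 0 < μ ω →
      Real.logb 2 (pr μ (fun ω' => (F ω', Y ω')) (F ω, Y ω)
          / (pr μ F (F ω) * pr μ Y (Y ω)))
      = Real.logb 2
          ((∏ i : Fin n, condpr μ (fun ω' => Y ω' i)
              (fun ω' => (pfx (X ω') (i.1 + 1) i.isLt, pfx (Y ω') i.1 i.isLt.le))
              (Y ω i)
              (pfx (X ω) (i.1 + 1) i.isLt, pfx (Y ω) i.1 i.isLt.le))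
            / pr μ Y (Y ω))
        - Real.logb 2
          ((∏ i : Fin n, condpr μ (fun ω' => Y ω' i)
              (fun ω' => (pfx (X ω') (i.1 + 1) i.isLt, pfx (F ω') (i.1 + 1) i.isLt,
                pfx (Y ω') i.1 i.isLt.le))
              (Y ω i)
              (pfx (X ω) (i.1 + 1) i.isLt, pfx (F ω) (i.1 + 1) i.isLt,
                pfx (Y ω) i.1 i.isLt.le))
            / (∏ i : Fin n, condpr μ (fun ω' => Y ω' i)
              (fun ω' => (pfx (F ω') (i.1 + 1) i.isLt, pfx (Y ω') i.1 i.isLt.le))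
              (Y ω i)
              (pfx (F ω) (i.1 + 1) i.isLt, pfx (Y ω) i.1 i.isLt.le))) :=
  stmt15_general μ hμ0 hμ1 F X Y hnofb hMarkov
end NFB
end
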